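/- Let Z_1,...,Z_{n+1} be exchangeable real-valued random variables with almost surely no ties. Then for any β ∈ (0,1), the probability that the rank of Z_{n+1} among Z_1,...,Z_{n+1} is at most ⌈β(n+1)⌉ is at least β. -/

import Mathlib

open MeasureTheory Finset
open scoped ENNReal

/-!
Without ties the ranks of `Z_1, …, Z_{n+1}` are a permutation of `1, …, n+1`, so exactly `k`
indices have rank at most `k`. By exchangeability each index has the same probability `p` of
this event, hence `(n + 1) p = k` and `P(rank Z_{n+1} ≤ ⌈β(n+1)⌉) = ⌈β(n+1)⌉ / (n+1) ≥ β`.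
-/

section SampleRank

variable {ι α : Type*} [Fintype ι] [LinearOrder α]

def sampleRank (v : ι → α) (j : ι) : ℕ := #{i | v i ≤ v j}

theorem sampleRank_lt_sampleRank {v : ι → α} {j j' : ι} (h : v j < v j') :
    sampleRank v j < sampleRank v j' := by
  refine card_lt_card ⟨fun i hi => ?_, fun hsub => ?_⟩
  · simp only [mem_filter, mem_univ, true_and] at hi ⊢
    exact hi.trans h.le
  · have := hsub (by simp : j' ∈ ({i | v i ≤ v j'} : Finset ι))
    simp only [mem_filter, mem_univ, true_and] at this
    exact this.not_gt h

theorem sampleRank_injective {v : ι → α} (hv : Function.Injective v) :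
    Function.Injective (sampleRank v) := by
  intro a b hab
  rcases lt_trichotomy (v a) (v b) with h | h | h
  · exact absurd hab (sampleRank_lt_sampleRank h).ne
  · exact hv h
  · exact absurd hab (sampleRank_lt_sampleRank h).ne'

theorem image_sampleRank {v : ι → α} (hv : Function.Injective v) :
    univ.image (sampleRank v) = Icc 1 (Fintype.card ι) := by
  refine eq_of_subset_of_card_le (fun m hm => ?_) ?_
  · obtain ⟨j, -, rfl⟩ := mem_image.mp hm
    exact mem_Icc.mpr ⟨card_pos.mpr ⟨j, by simp⟩, card_filter_le _ _⟩
  · rw [Nat.card_Icc, card_image_of_injective _ (sampleRank_injective hv), card_univ,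
      Nat.add_sub_cancel]

theorem card_sampleRank_le {v : ι → α} (hv : Function.Injective v) {k : ℕ}
    (hk : k ≤ Fintype.card ι) : #{j | sampleRank v j ≤ k} = k := by
  have hIcc : (Icc 1 (Fintype.card ι)).filter (· ≤ k) = Icc 1 k := by
    ext m
    simp only [mem_filter, mem_Icc]
    omega
  calc #{j | sampleRank v j ≤ k}
      = #((univ.image (sampleRank v)).filter (· ≤ k)) := by
        rw [filter_image, card_image_of_injective _ (sampleRank_injective hv)]
    _ = k := by rw [image_sampleRank hv, hIcc, Nat.card_Icc, Nat.add_sub_cancel]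

theorem sampleRank_comp_perm (v : ι → α) (σ : Equiv.Perm ι) (j : ι) :
    sampleRank (v ∘ σ) j = sampleRank v (σ j) :=
  card_equiv σ fun i => by simp

theorem sampleRank_last {n : ℕ} (v : Fin (n + 1) → α) :
    sampleRank v (Fin.last n) = 1 + #{i : Fin n | v i.castSucc ≤ v (Fin.last n)} := by
  rw [sampleRank, Fin.univ_castSuccEmb, filter_cons, if_pos le_rfl, card_cons, filter_map,
    card_map, add_comm]
  rfl

end SampleRank

theorem measurable_sampleRank {ι : Type*} [Fintype ι] (j : ι) :
    Measurable fun v : ι → ℝ => sampleRank v j := by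
  simp_rw [sampleRank, card_filter]
  exact Finset.measurable_sum _ fun i _ => Measurable.ite
    (measurableSet_le (measurable_pi_apply i) (measurable_pi_apply j)) measurable_const
    measurable_const

theorem ENNReal.ofReal_le_natCeil_mul_div (β : ℝ) {m : ℕ} (hm : m ≠ 0) :
    ENNReal.ofReal β ≤ ⌈β * m⌉₊ / m := by
  rw [ENNReal.le_div_iff_mul_le (.inl (Nat.cast_ne_zero.mpr hm)) (.inl (ENNReal.natCast_ne_top m)),
    ← ENNReal.ofReal_natCast m, ← ENNReal.ofReal_mul' m.cast_nonneg, ← ENNReal.ofReal_natCast]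
  exact ENNReal.ofReal_le_ofReal (Nat.le_ceil _)

section Exchangeable

variable {Ω ι : Type*} [MeasurableSpace Ω] {μ : Measure Ω} [Fintype ι] {X : ι → Ω → ℝ}

theorem measure_sampleRank_le_perm (hX : ∀ i, Measurable (X i))
    (hexch : ∀ σ : Equiv.Perm ι, μ.map (fun ω i => X (σ i) ω) = μ.map (fun ω i => X i ω))
    (σ : Equiv.Perm ι) (j : ι) (k : ℕ) :
    μ {ω | sampleRank (X · ω) (σ j) ≤ k} = μ {ω | sampleRank (X · ω) j ≤ k} := by
  have hS : MeasurableSet {v : ι → ℝ | sampleRank v j ≤ k} :=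
    measurableSet_le (measurable_sampleRank j) measurable_const
  calc μ {ω | sampleRank (X · ω) (σ j) ≤ k}
      = μ.map (fun ω i => X (σ i) ω) {v | sampleRank v j ≤ k} := by
        rw [Measure.map_apply (measurable_pi_lambda _ fun i => hX (σ i)) hS]
        congr 1
        ext ω
        exact iff_of_eq (congrArg (· ≤ k) (sampleRank_comp_perm (X · ω) σ j).symm)
    _ = μ.map (fun ω i => X i ω) {v | sampleRank v j ≤ k} := by rw [hexch]
    _ = μ {ω | sampleRank (X · ω) j ≤ k} := Measure.map_apply (measurable_pi_lambda _ hX) hS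

omit [Fintype ι] in
theorem ae_injective_of_measure_eq_zero {β : Type*} [Countable ι] {Y : ι → Ω → β}
    (hties : ∀ i j, i ≠ j → μ {ω | Y i ω = Y j ω} = 0) :
    ∀ᵐ ω ∂μ, Function.Injective (Y · ω) := by
  simp only [Function.Injective, ae_all_iff]
  intro i j
  by_cases hij : i = j
  · exact .of_forall fun _ _ => hij
  · exact ae_iff.mpr (by simpa [hij] using hties i j hij)

theorem sum_measure_sampleRank_le [IsProbabilityMeasure μ] (hX : ∀ i, Measurable (X i))
    (hinj : ∀ᵐ ω ∂μ, Function.Injective (X · ω)) {k : ℕ} (hk : k ≤ Fintype.card ι) :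
    ∑ j, μ {ω | sampleRank (X · ω) j ≤ k} = k := by
  have hA : ∀ j, MeasurableSet {ω | sampleRank (X · ω) j ≤ k} := fun j =>
    measurableSet_le ((measurable_sampleRank j).comp (measurable_pi_lambda _ hX)) measurable_const
  have hcount : ∀ᵐ ω ∂μ, ∑ j, {ω | sampleRank (X · ω) j ≤ k}.indicator 1 ω = (k : ℝ≥0∞) := by
    filter_upwards [hinj] with ω hω
    simp [Set.indicator_apply, sum_boole, card_sampleRank_le hω hk]
  calc ∑ j, μ {ω | sampleRank (X · ω) j ≤ k}
      = ∫⁻ ω, ∑ j, {ω | sampleRank (X · ω) j ≤ k}.indicator 1 ω ∂μ := by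
        rw [lintegral_finsetSum _ fun j _ => measurable_one.indicator (hA j)]
        simp_rw [lintegral_indicator_one (hA _)]
    _ = k := by rw [lintegral_congr_ae hcount, lintegral_const, measure_univ, mul_one]

theorem measure_sampleRank_le [IsProbabilityMeasure μ] (hX : ∀ i, Measurable (X i))
    (hexch : ∀ σ : Equiv.Perm ι, μ.map (fun ω i => X (σ i) ω) = μ.map (fun ω i => X i ω))
    (hties : ∀ i j, i ≠ j → μ {ω | X i ω = X j ω} = 0) {k : ℕ} (hk : k ≤ Fintype.card ι)
    (j : ι) :
    μ {ω | sampleRank (X · ω) j ≤ k} = k / Fintype.card ι := by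
  classical
  have hsum := sum_measure_sampleRank_le hX (ae_injective_of_measure_eq_zero hties) hk
  have hconst : ∀ j', μ {ω | sampleRank (X · ω) j' ≤ k} = μ {ω | sampleRank (X · ω) j ≤ k} :=
    fun j' => by
      simpa using measure_sampleRank_le_perm hX hexch (Equiv.swap j' j) j k
  simp_rw [hconst, sum_const, card_univ, nsmul_eq_mul] at hsum
  have hcard : (Fintype.card ι : ℝ≥0∞) ≠ 0 := by simpa using (Fintype.card_pos_iff.mpr ⟨j⟩).ne'
  rw [ENNReal.eq_div_iff hcard (ENNReal.natCast_ne_top _), hsum]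

end Exchangeable

/-- Conformal rank lemma: for exchangeable random variables with a.s. no ties,
the rank of `Z_{n+1}` among `Z_1, ..., Z_{n+1}` is at most `⌈β(n+1)⌉` with
probability at least `β`. -/
theorem conformal_rank_coverage
    {Ω : Type*} [MeasurableSpace Ω] (μ : Measure Ω) [IsProbabilityMeasure μ]
    (n : ℕ) (Z : Fin (n + 1) → Ω → ℝ) (hZ : ∀ i, Measurable (Z i))
    (hexch : ∀ σ : Equiv.Perm (Fin (n + 1)),
      Measure.map (fun ω => fun i => Z (σ i) ω) μ
        = Measure.map (fun ω => fun i => Z i ω) μ)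
    (hties : ∀ i j, i ≠ j → μ {ω | Z i ω = Z j ω} = 0)
    (β : ℝ) (hβ : β ∈ Set.Ioo (0 : ℝ) 1) :
    ENNReal.ofReal β ≤
      μ {ω | 1 + (Finset.univ.filter
          fun i : Fin n => Z i.castSucc ω ≤ Z (Fin.last n) ω).card
        ≤ ⌈β * (n + 1)⌉₊} := by
  have hk : ⌈β * (n + 1)⌉₊ ≤ Fintype.card (Fin (n + 1)) := by
    rw [Fintype.card_fin, Nat.ceil_le]
    push_cast
    nlinarith [hβ.2]
  have hrank : ∀ ω, 1 + #{i : Fin n | Z i.castSucc ω ≤ Z (Fin.last n) ω}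
      = sampleRank (Z · ω) (Fin.last n) := fun ω => (sampleRank_last (Z · ω)).symm
  simp_rw [hrank, measure_sampleRank_le hZ hexch hties hk, Fintype.card_fin]
  exact_mod_cast ENNReal.ofReal_le_natCeil_mul_div β n.add_one_ne_zero
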